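/- arXiv:1502.07787 — 2 statements merged into one kernel-verified Lean document; each statement's English description precedes it below -/
import Mathlib

section
/- Let S ⊆ H_N be a 𝒫-symmetric set, let v ∈ m(S), and set S_v = {x ∈ S : m(x) = v}. For each i ∈ {1,…,k} let I_i, O_i ⊆ P_i be disjoint subsets, and let A_i = {x ∈ H_N : x_e = 1 for all e ∈ I_i and x_e = 0 for all e ∈ O_i}. Then the events A_1,…,A_k are independent under the uniform distribution on S_v; equivalently, as a counting identity: |S_v ∩ A_1 ∩ ⋯ ∩ A_k| · |S_v|^{k−1} = ∏_{i=1}^k |S_v ∩ A_i|. -/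
/-!
Permutations preserving every part act transitively on each level set `{x | m(x) = v}`, so the
symmetric set `S` contains the whole level set as soon as it meets it, i.e. `S_v = {x | m(x) = v}`.
Restricting `x` to the parts identifies this level set with the product
`∏ i, {y : P_i → Bool | |y| = v_i}`, and `A_i` only constrains the `i`-th factor. Events
constraining different factors of a product set are independent for the counting measure.
-/

/-- The edge profile of `x : Fin N → Bool` with respect to the parts `P i`:
`m i x` is the number of coordinates in `P i` where `x` equals `true`. -/
def edgeProfile {N k : ℕ} (P : Fin k → Finset (Fin N)) (x : Fin N → Bool) (i : Fin k) : ℕ :=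
  ∑ e ∈ P i, if x e then 1 else 0

open Finset Fintype

section Independence

variable {ι : Type*} [Fintype ι] [DecidableEq ι] {β : ι → Type*}

lemma filter_piFinset_forall (s : ∀ i, Finset (β i)) (p : ∀ i, β i → Prop)
    [∀ i, DecidablePred (p i)] :
    {x ∈ piFinset s | ∀ i, p i (x i)} = piFinset fun i => {b ∈ s i | p i b} := by
  ext x
  simp only [mem_filter, mem_piFinset, forall_and]

lemma card_filter_piFinset_apply [∀ i, DecidableEq (β i)] (s : ∀ i, Finset (β i)) (i : ι)
    (p : β i → Prop) [DecidablePred p] :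
    #{x ∈ piFinset s | p (x i)} = #{b ∈ s i | p b} * ∏ j ∈ univ.erase i, #(s j) := by
  have : {x ∈ piFinset s | p (x i)} = piFinset (Function.update s i {b ∈ s i | p b}) := by
    rw [piFinset_update_eq_filter_piFinset_mem _ _ (filter_subset _ _)]
    exact filter_congr fun x hx => by simp [mem_piFinset.mp hx i]
  rw [this, card_piFinset, ← mul_prod_erase univ _ (mem_univ i), Function.update_self]
  congr 1
  exact prod_congr rfl fun j hj => by rw [Function.update_of_ne (ne_of_mem_erase hj)]

lemma prod_mul_prod_erase_eq {M : Type*} [CommMonoid M] (a n : ι → M) :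
    ∏ i, (a i * ∏ j ∈ univ.erase i, n j) = (∏ i, a i) * (∏ i, n i) ^ (card ι - 1) := by
  rw [prod_mul_distrib, prod_comm' (t' := univ) (s' := fun j => univ.erase j)
    (fun i j => by simp only [mem_univ, true_and, and_true, mem_erase, ne_comm]), ← prod_pow]
  simp only [prod_const, card_erase_of_mem (mem_univ _), card_univ]

theorem card_filter_piFinset_forall_mul_pow [∀ i, DecidableEq (β i)] (s : ∀ i, Finset (β i))
    (p : ∀ i, β i → Prop) [∀ i, DecidablePred (p i)] :
    #{x ∈ piFinset s | ∀ i, p i (x i)} * #(piFinset s) ^ (card ι - 1)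
      = ∏ i, #{x ∈ piFinset s | p i (x i)} := by
  simp only [card_filter_piFinset_apply, prod_mul_prod_erase_eq, filter_piFinset_forall,
    card_piFinset]

end Independence

section Fibers

variable {α ι : Type*}

lemma exists_eq_fiber_of_partition [Fintype α] [DecidableEq ι] {P : ι → Finset α}
    (hdisj : ∀ i j, i ≠ j → Disjoint (P i) (P j)) (hcover : ∀ a, ∃ i, a ∈ P i) :
    ∃ f : α → ι, ∀ i, P i = ({a | f a = i} : Finset α) := by
  choose f hf using hcover
  refine ⟨f, fun i => ext fun a => ?_⟩
  simp only [mem_filter, mem_univ, true_and]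
  refine ⟨fun ha => ?_, fun hfa => hfa ▸ hf a⟩
  by_contra hfa
  exact disjoint_left.mp (hdisj _ _ (Ne.symm hfa)) ha (hf a)

lemma image_fiber_eq_of_perm [Fintype α] [DecidableEq α] [DecidableEq ι] {f : α → ι}
    {π : Equiv.Perm α} (hπ : ∀ a, f (π a) = f a) (i : ι) :
    ({a | f a = i} : Finset α).image π = ({a | f a = i} : Finset α) := by
  ext a
  simp only [mem_image, mem_filter, mem_univ, true_and]
  refine ⟨fun ⟨b, hb, hba⟩ => hba ▸ (hπ b).trans hb, fun ha => ⟨π.symm a, ?_, π.apply_symm_apply a⟩⟩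
  rw [← hπ, π.apply_symm_apply, ha]

lemma exists_perm_comp_eq_of_card_fiber_eq [Fintype α] {γ : Type*} [DecidableEq γ] {g h : α → γ}
    (hc : ∀ c, card {a // g a = c} = card {a // h a = c}) : ∃ π : Equiv.Perm α, g ∘ π = h :=
  ⟨.ofFiberEquiv fun c => equivOfCardEq (hc c).symm, funext (Equiv.ofFiberEquiv_map _)⟩

lemma card_filter_fiber_false [Fintype α] [DecidableEq ι] (f : α → ι) (x : α → Bool) (i : ι) :
    #{a | f a = i ∧ x a = false} = #{a | f a = i} - #{a | f a = i ∧ x a = true} := by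
  rw [← card_filter_add_card_filter_not (fun a => x a = true) (s := {a | f a = i})]
  simp only [filter_filter, Bool.not_eq_true, Nat.add_sub_cancel_left]

lemma exists_perm_of_card_fiber_eq [Fintype α] [DecidableEq ι] (f : α → ι) {x y : α → Bool}
    (h : ∀ i, #{a | f a = i ∧ x a = true} = #{a | f a = i ∧ y a = true}) :
    ∃ π : Equiv.Perm α, (∀ a, f (π a) = f a) ∧ x ∘ π = y := by
  have hc : ∀ c : ι × Bool, card {a // (f a, x a) = c} = card {a // (f a, y a) = c} := by
    rintro ⟨i, b⟩
    simp only [Fintype.card_subtype, Prod.mk.injEq]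
    cases b
    · rw [card_filter_fiber_false, card_filter_fiber_false, h]
    · exact h i
  obtain ⟨π, hπ⟩ := exists_perm_comp_eq_of_card_fiber_eq hc
  exact ⟨π, fun a => congrArg Prod.fst (congrFun hπ a),
    funext fun a => congrArg Prod.snd (congrFun hπ a)⟩

def restrictFibers (f : α → ι) (β : Type*) : (α → β) ≃ ∀ i, ({a // f a = i} → β) :=
  (Equiv.arrowCongr (Equiv.sigmaFiberEquiv f) (Equiv.refl β)).symm.trans
    (Equiv.piCurry fun _ _ => β)

lemma card_filter_restrictFibers [Fintype α] [DecidableEq ι] {β : Type*} [DecidableEq β]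
    (f : α → ι) (i : ι) (x : α → β) (b : β) :
    #{a | restrictFibers f β x i a = b} = #{a | f a = i ∧ x a = b} := by
  change #{a : {a // f a = i} | x a = b} = _
  rw [← card_map (Function.Embedding.subtype _)]
  congr 1
  ext a
  simp [and_comm]

lemma forall_mem_iff_forall_fiber [Fintype α] [DecidableEq ι] (f : α → ι) {i : ι}
    {T : Finset α} (hT : T ⊆ ({a | f a = i} : Finset α)) (q : α → Prop) :
    (∀ a ∈ T, q a) ↔ ∀ a : {a // f a = i}, a.1 ∈ T → q a :=
  ⟨fun h a ha => h a ha, fun h a ha => h ⟨a, by simpa using hT ha⟩ ha⟩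

end Fibers

section EdgeProfile

variable {N k : ℕ} {P : Fin k → Finset (Fin N)} {f : Fin N → Fin k}

lemma edgeProfile_eq_card_filter (hP : ∀ i, P i = ({e | f e = i} : Finset (Fin N)))
    (x : Fin N → Bool) (i : Fin k) :
    edgeProfile P x i = #{e | f e = i ∧ x e = true} := by
  rw [edgeProfile, ← card_filter, hP, filter_filter]

lemma edgeProfile_eq_iff_restrictFibers_mem (hP : ∀ i, P i = ({e | f e = i} : Finset (Fin N)))
    (x : Fin N → Bool) (v : Fin k → ℕ) :
    edgeProfile P x = v ↔
      restrictFibers f Bool x ∈ piFinset fun i => {g | #{a | g a = true} = v i} := by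
  simp only [mem_piFinset, mem_filter, mem_univ, true_and, card_filter_restrictFibers,
    funext_iff, edgeProfile_eq_card_filter hP]

lemma mem_of_edgeProfile_mem_image (hP : ∀ i, P i = ({e | f e = i} : Finset (Fin N)))
    {S : Finset (Fin N → Bool)}
    (hsym : ∀ π : Equiv.Perm (Fin N), (∀ i, (P i).image π = P i) → ∀ x, x ∈ S ↔ x ∘ π ∈ S)
    {x : Fin N → Bool} (hx : edgeProfile P x ∈ S.image (edgeProfile P)) : x ∈ S := by
  obtain ⟨x₀, hx₀, hprofile⟩ := mem_image.mp hx
  have hfiber : ∀ i, #{e | f e = i ∧ x₀ e = true} = #{e | f e = i ∧ x e = true} := fun i => by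
    rw [← edgeProfile_eq_card_filter hP, ← edgeProfile_eq_card_filter hP, hprofile]
  obtain ⟨π, hπ, rfl⟩ := exists_perm_of_card_fiber_eq f hfiber
  exact (hsym π (fun i => by rw [hP]; exact image_fiber_eq_of_perm hπ i) x₀).mp hx₀

end EdgeProfile

theorem stmt2_general (N k : ℕ)
    (P : Fin k → Finset (Fin N))
    (hdisj : ∀ i j, i ≠ j → Disjoint (P i) (P j))
    (hcover : ∀ e : Fin N, ∃ i, e ∈ P i)
    (S : Finset (Fin N → Bool))
    (hsym : ∀ (π : Equiv.Perm (Fin N)), (∀ i, (P i).image π = P i) →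
      ∀ x : Fin N → Bool, x ∈ S ↔ (x ∘ π) ∈ S)
    (v : Fin k → ℕ) (hv : v ∈ S.image (edgeProfile P))
    (I O : Fin k → Finset (Fin N))
    (hI : ∀ i, I i ⊆ P i) (hO : ∀ i, O i ⊆ P i) :
    ((S.filter (fun x => edgeProfile P x = v)).filter
        (fun x => ∀ i, (∀ e ∈ I i, x e = true) ∧ (∀ e ∈ O i, x e = false))).card
      * (S.filter (fun x => edgeProfile P x = v)).card ^ (k - 1)
    = ∏ i, ((S.filter (fun x => edgeProfile P x = v)).filter
        (fun x => (∀ e ∈ I i, x e = true) ∧ (∀ e ∈ O i, x e = false))).card := by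
  classical
  obtain ⟨f, hP⟩ := exists_eq_fiber_of_partition hdisj hcover
  let s : ∀ i, Finset ({a // f a = i} → Bool) := fun i => {g | #{a | g a = true} = v i}
  let A : ∀ i, ({a // f a = i} → Bool) → Prop := fun i g =>
    (∀ a, a.1 ∈ I i → g a = true) ∧ (∀ a, a.1 ∈ O i → g a = false)
  have hlevel : ∀ x, x ∈ S ∧ edgeProfile P x = v ↔ restrictFibers f Bool x ∈ piFinset s :=
    fun x => ⟨fun h => (edgeProfile_eq_iff_restrictFibers_mem hP x v).mp h.2, fun h =>
      have hx := (edgeProfile_eq_iff_restrictFibers_mem hP x v).mpr h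
      ⟨mem_of_edgeProfile_mem_image hP hsym (hx ▸ hv), hx⟩⟩
  have hA : ∀ x i, ((∀ e ∈ I i, x e = true) ∧ (∀ e ∈ O i, x e = false)) ↔
      A i (restrictFibers f Bool x i) := fun x i =>
    and_congr (forall_mem_iff_forall_fiber f (hP i ▸ hI i) _)
      (forall_mem_iff_forall_fiber f (hP i ▸ hO i) _)
  calc _ = #{y ∈ piFinset s | ∀ i, A i (y i)} * #(piFinset s) ^ (card (Fin k) - 1) := by
        rw [Fintype.card_fin,
          card_equiv (s := {x ∈ S | edgeProfile P x = v}) (t := piFinset s)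
            (restrictFibers f Bool) fun x => by simp only [mem_filter, hlevel],
          card_equiv (t := {y ∈ piFinset s | ∀ i, A i (y i)})
            (restrictFibers f Bool) fun x => by simp only [mem_filter, hlevel, hA]]
    -- `convert` only reconciles the decidability instances of the filters.
    _ = ∏ i, #{y ∈ piFinset s | A i (y i)} := by convert card_filter_piFinset_forall_mul_pow s A
    _ = _ := prod_congr rfl fun i _ => (card_equiv (restrictFibers f Bool) fun x => by
        simp only [mem_filter, hlevel, hA]).symm

/-- Conditional on the edge profile, the events "all edges of `I i` present and all edges of
`O i` absent" (for `I i, O i ⊆ P i` disjoint) are independent under the uniform measure on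
`S_v = {x ∈ S : m(x) = v}`, stated as the counting identity
`|S_v ∩ A_1 ∩ ⋯ ∩ A_k| ⬝ |S_v|^(k-1) = ∏ i, |S_v ∩ A_i|`. -/
theorem stmt2 (N k : ℕ) (hN : 0 < N)
    (P : Fin k → Finset (Fin N))
    (hne : ∀ i, (P i).Nonempty)
    (hdisj : ∀ i j, i ≠ j → Disjoint (P i) (P j))
    (hcover : ∀ e : Fin N, ∃ i, e ∈ P i)
    (S : Finset (Fin N → Bool))
    (hsym : ∀ (π : Equiv.Perm (Fin N)), (∀ i, (P i).image π = P i) →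
      ∀ x : Fin N → Bool, x ∈ S ↔ (x ∘ π) ∈ S)
    (v : Fin k → ℕ) (hv : v ∈ S.image (edgeProfile P))
    (I O : Fin k → Finset (Fin N))
    (hI : ∀ i, I i ⊆ P i) (hO : ∀ i, O i ⊆ P i)
    (hIO : ∀ i, Disjoint (I i) (O i)) :
    ((S.filter (fun x => edgeProfile P x = v)).filter
        (fun x => ∀ i, (∀ e ∈ I i, x e = true) ∧ (∀ e ∈ O i, x e = false))).card
      * (S.filter (fun x => edgeProfile P x = v)).card ^ (k - 1)
    = ∏ i, ((S.filter (fun x => edgeProfile P x = v)).filter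
        (fun x => (∀ e ∈ I i, x e = true) ∧ (∀ e ∈ O i, x e = false))).card :=
  stmt2_general N k P hdisj hcover S hsym v hv I O hI hO
end

section
/- Coupling lemma for uniform subsets and Bernoulli subsets: Let A be a finite set with |A| = N ≥ 1, let m be an integer with 1 ≤ m ≤ N, let δ ∈ (0,1), and assume m ≤ (1−δ)·N. Set p⁻ = m/((1+δ)·N) and p⁺ = m/((1−δ)·N) (so 0 < p⁻ ≤ p⁺ ≤ 1). Then there exists a probability mass function κ on triples (Z⁻, X, Z⁺) of subsets of A such that: (i) the marginal of X is uniform over all m-element subsets of A; (ii) for each sign ±, the marginal of Z^± assigns to each subset T ⊆ A probability (p^±)^{|T|}·(1−p^±)^{N−|T|}; and (iii) κ({(Z⁻, X, Z⁺) : Z⁻ ⊆ X ⊆ Z⁺}) ≥ 1 − 2·exp(−δ²·m/(3(1+δ))). -/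
open Finset Real
open scoped Pointwise

/-!
Draw `Z⁻` as a Bernoulli(`p⁻`) subset and then `X` uniformly among the `m`-sets containing `Z⁻`
(among all `m`-sets if `|Z⁻| > m`); symmetrically, draw `Z⁺` as a Bernoulli(`p⁺`) subset and `X`
uniformly among its `m`-subsets. In both couplings `X` is uniform on `m`-sets: its law is
carried by `m`-sets and, like everything in the construction, invariant under permutations of
`A`, which act transitively on `m`-sets. Gluing the two couplings along `X`, conditionally
independently given `X`, gives `κ`. Nesting can only fail when `|Z⁻| > m = (1 + δ) 𝔼|Z⁻|` or
`|Z⁺| < m = (1 - δ) 𝔼|Z⁺|`, and the Chernoff bound controls both events.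
-/

namespace SubsetCoupling

section UniformWeight

variable {β : Type*} [DecidableEq β]

noncomputable def uniformWeight (S : Finset β) (x : β) : ℝ :=
  if x ∈ S then (#S : ℝ)⁻¹ else 0

lemma uniformWeight_nonneg (S : Finset β) (x : β) : 0 ≤ uniformWeight S x := by
  unfold uniformWeight; split_ifs <;> positivity

lemma mem_of_uniformWeight_ne_zero {S : Finset β} {x : β} (h : uniformWeight S x ≠ 0) :
    x ∈ S := by
  by_contra hx
  exact h (if_neg hx)

lemma sum_uniformWeight [Fintype β] {S : Finset β} (hS : S.Nonempty) :
    ∑ x, uniformWeight S x = 1 := by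
  have : (#S : ℝ) ≠ 0 := by exact_mod_cast hS.card_pos.ne'
  simp only [uniformWeight, sum_ite_mem, univ_inter, sum_const, nsmul_eq_mul]
  exact mul_inv_cancel₀ this

lemma uniformWeight_equiv {S T : Finset β} (e : β ≃ β) (hST : ∀ x, x ∈ S ↔ e x ∈ T) (x : β) :
    uniformWeight T (e x) = uniformWeight S x := by
  simp only [uniformWeight, ← hST, card_equiv e hST]

end UniformWeight

section PermInvariant

variable {α : Type*} [Fintype α] [DecidableEq α]

lemma eq_uniformWeight_of_perm_invariant {m : ℕ} (f : Finset α → ℝ)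
    (hinv : ∀ (σ : Equiv.Perm α) X, f (σ • X) = f X) (hsupp : ∀ X, f X ≠ 0 → #X = m)
    (hsum : ∑ X, f X = 1) (X : Finset α) :
    f X = uniformWeight (powersetCard m univ) X := by
  by_cases hX : #X = m
  · have hconst : ∀ Y ∈ powersetCard m univ, f Y = f X := by
      intro Y hY
      have := Set.powersetCard.isPretransitive (α := α) (n := m)
      obtain ⟨σ, hσ⟩ := MulAction.exists_smul_eq (Equiv.Perm α)
        (⟨X, hX⟩ : Set.powersetCard α m) ⟨Y, (mem_powersetCard.1 hY).2⟩
      have hσ' : σ • X = Y := by simpa using congrArg Subtype.val hσ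
      rw [← hσ', hinv]
    have hsum' : ∑ Y ∈ powersetCard m univ, f Y = 1 := by
      rw [← hsum]
      refine sum_subset (subset_univ _) fun Y _ hY => ?_
      by_contra hfY
      exact hY (mem_powersetCard.2 ⟨subset_univ Y, hsupp Y hfY⟩)
    rw [sum_congr rfl hconst, sum_const, nsmul_eq_mul] at hsum'
    rw [uniformWeight, if_pos (mem_powersetCard.2 ⟨subset_univ X, hX⟩)]
    exact eq_inv_of_mul_eq_one_right hsum'
  · rw [uniformWeight, if_neg fun h => hX (mem_powersetCard.1 h).2]
    by_contra hfX
    exact hX (hsupp X hfX)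

lemma uniformWeight_powersetCard_univ (m : ℕ) (X : Finset α) :
    uniformWeight (powersetCard m univ) X
      = if #X = m then (((Fintype.card α).choose m : ℕ) : ℝ)⁻¹ else 0 := by
  simp [uniformWeight, mem_powersetCard, card_powersetCard]

theorem sum_mul_uniformWeight_eq_uniformWeight_powersetCard {m : ℕ} (w : Finset α → ℝ)
    (hw : ∀ (σ : Equiv.Perm α) Z, w (σ • Z) = w Z) (hw1 : ∑ Z, w Z = 1)
    (S : Finset α → Finset (Finset α)) (hS : ∀ (σ : Equiv.Perm α) Z X, X ∈ S Z ↔ σ • X ∈ S (σ • Z))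
    (hne : ∀ Z, (S Z).Nonempty) (hcard : ∀ Z, ∀ X ∈ S Z, #X = m) (X : Finset α) :
    ∑ Z, w Z * uniformWeight (S Z) X = uniformWeight (powersetCard m univ) X := by
  refine eq_uniformWeight_of_perm_invariant (fun X => ∑ Z, w Z * uniformWeight (S Z) X)
    (fun σ X => ?_) (fun X hX => ?_) ?_ X
  · rw [← Fintype.sum_equiv (MulAction.toPerm σ) _ _ fun _ => rfl]
    refine Fintype.sum_congr _ _ fun Z => ?_
    simp only [MulAction.toPerm_apply, hw]
    congr 1
    exact uniformWeight_equiv (MulAction.toPerm σ) (hS σ Z) X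
  · obtain ⟨Z, -, hZ⟩ := exists_ne_zero_of_sum_ne_zero hX
    exact hcard Z X (mem_of_uniformWeight_ne_zero (right_ne_zero_of_mul hZ))
  · rw [sum_comm]
    simp only [← mul_sum, sum_uniformWeight (hne _), mul_one, hw1]

end PermInvariant

section Bernoulli

variable {α : Type*} [Fintype α]

noncomputable def bernoulliWeight (p : ℝ) (Z : Finset α) : ℝ :=
  p ^ #Z * (1 - p) ^ (Fintype.card α - #Z)

variable {p : ℝ}

lemma bernoulliWeight_nonneg (hp0 : 0 ≤ p) (hp1 : p ≤ 1) (Z : Finset α) :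
    0 ≤ bernoulliWeight p Z :=
  mul_nonneg (pow_nonneg hp0 _) (pow_nonneg (sub_nonneg.2 hp1) _)

lemma bernoulliWeight_smul [DecidableEq α] (σ : Equiv.Perm α) (Z : Finset α) :
    bernoulliWeight p (σ • Z) = bernoulliWeight p Z := by
  simp only [bernoulliWeight, card_smul_finset]

lemma sum_bernoulliWeight_mul_pow_card (a : ℝ) :
    ∑ Z : Finset α, bernoulliWeight p Z * a ^ #Z = (p * a + (1 - p)) ^ Fintype.card α := by
  rw [← card_univ, ← sum_pow_mul_eq_add_pow, powerset_univ]
  refine sum_congr rfl fun Z _ => ?_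
  rw [bernoulliWeight, card_univ]
  ring

lemma sum_bernoulliWeight : ∑ Z : Finset α, bernoulliWeight p Z = 1 := by
  simpa using sum_bernoulliWeight_mul_pow_card (α := α) (p := p) 1

lemma sum_bernoulliWeight_filter_le_exp (hp0 : 0 ≤ p) (hp1 : p ≤ 1) (l t : ℝ)
    (P : Finset α → Prop) [DecidablePred P] (hP : ∀ Z, P Z → l * t ≤ l * #Z) :
    ∑ Z with P Z, bernoulliWeight p Z
      ≤ exp (Fintype.card α * p * (exp l - 1) - l * t) := by
  calc ∑ Z with P Z, bernoulliWeight p Z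
      ≤ ∑ Z with P Z, bernoulliWeight p Z * exp (l * #Z - l * t) := by
        refine sum_le_sum fun Z hZ => le_mul_of_one_le_right (bernoulliWeight_nonneg hp0 hp1 Z) ?_
        exact one_le_exp (sub_nonneg.2 (hP Z (mem_filter.1 hZ).2))
    _ ≤ ∑ Z, bernoulliWeight p Z * exp (l * #Z - l * t) :=
        sum_le_sum_of_subset_of_nonneg (subset_univ _) fun Z _ _ =>
          mul_nonneg (bernoulliWeight_nonneg hp0 hp1 Z) (exp_pos _).le
    _ = (p * exp l + (1 - p)) ^ Fintype.card α * exp (-(l * t)) := by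
        rw [← sum_bernoulliWeight_mul_pow_card, sum_mul]
        refine sum_congr rfl fun Z _ => ?_
        rw [← exp_nat_mul, sub_eq_add_neg, exp_add]
        ring_nf
    _ ≤ exp (p * (exp l - 1)) ^ Fintype.card α * exp (-(l * t)) := by
        have hbase : 0 ≤ p * exp l + (1 - p) := by nlinarith [exp_pos l]
        gcongr
        linarith [add_one_le_exp (p * (exp l - 1))]
    _ = exp (Fintype.card α * p * (exp l - 1) - l * t) := by
        rw [← exp_nat_mul, ← exp_add]
        ring_nf

lemma exp_le_one_add_add_sq {x : ℝ} (hx : |x| ≤ 1) : exp x ≤ 1 + x + 3 / 4 * x ^ 2 := by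
  have h := abs_sub_le_iff.1 (exp_bound hx (n := 2) (by norm_num))
  norm_num [sum_range_succ, sq_abs] at h
  linarith [h.1]

-- With `l = 2δ/3`, `exp_le_one_add_add_sq` makes the Chernoff exponent exactly `-δ² N p / 3`.
theorem bernoulliWeight_upper_tail (hp0 : 0 ≤ p) (hp1 : p ≤ 1) {δ : ℝ} (hδ0 : 0 ≤ δ)
    (hδ1 : δ ≤ 3 / 2) :
    ∑ Z : Finset α with (1 + δ) * (Fintype.card α * p) < #Z, bernoulliWeight p Z
      ≤ exp (-(δ ^ 2 * (Fintype.card α * p) / 3)) := by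
  refine (sum_bernoulliWeight_filter_le_exp hp0 hp1 (2 * δ / 3) _ _
    fun Z hZ => mul_le_mul_of_nonneg_left hZ.le (by positivity)).trans (exp_le_exp.2 ?_)
  have hexp := exp_le_one_add_add_sq (x := 2 * δ / 3) (by rw [abs_le]; constructor <;> linarith)
  have hμ : 0 ≤ (Fintype.card α : ℝ) * p := by positivity
  nlinarith

theorem bernoulliWeight_lower_tail (hp0 : 0 ≤ p) (hp1 : p ≤ 1) {δ : ℝ} (hδ0 : 0 ≤ δ)
    (hδ1 : δ ≤ 3 / 2) :
    ∑ Z : Finset α with #Z < (1 - δ) * (Fintype.card α * p), bernoulliWeight p Z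
      ≤ exp (-(δ ^ 2 * (Fintype.card α * p) / 3)) := by
  refine (sum_bernoulliWeight_filter_le_exp hp0 hp1 (-(2 * δ / 3)) _ _
    fun Z hZ => mul_le_mul_of_nonpos_left hZ.le (by linarith)).trans (exp_le_exp.2 ?_)
  have hexp := exp_le_one_add_add_sq (x := -(2 * δ / 3)) (by rw [abs_le]; constructor <;> linarith)
  have hμ : 0 ≤ (Fintype.card α : ℝ) * p := by positivity
  nlinarith

theorem sum_bernoulliWeight_card_gt_add_sum_card_lt_le {q δ : ℝ} {m : ℕ} (hp0 : 0 ≤ p)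
    (hp1 : p ≤ 1) (hq0 : 0 ≤ q) (hq1 : q ≤ 1) (hδ0 : 0 < δ) (hδ1 : δ < 1)
    (hp : (1 + δ) * (Fintype.card α * p) = m) (hq : (1 - δ) * (Fintype.card α * q) = m) :
    ∑ Z : Finset α with m < #Z, bernoulliWeight p Z
      + ∑ Z : Finset α with #Z < m, bernoulliWeight q Z
        ≤ 2 * exp (-(δ ^ 2 * m / (3 * (1 + δ)))) := by
  have hupper := bernoulliWeight_upper_tail (α := α) hp0 hp1 hδ0.le (by linarith)
  have hlower := bernoulliWeight_lower_tail (α := α) hq0 hq1 hδ0.le (by linarith)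
  rw [hp] at hupper
  rw [hq] at hlower
  simp only [Nat.cast_lt] at hupper hlower
  have hμp : Fintype.card α * p = m / (1 + δ) := eq_div_of_mul_eq (by linarith) (by linarith)
  have hμq : Fintype.card α * q = m / (1 - δ) := eq_div_of_mul_eq (by linarith) (by linarith)
  have hpq : exp (-(δ ^ 2 * (Fintype.card α * q) / 3))
      ≤ exp (-(δ ^ 2 * (Fintype.card α * p) / 3)) := by
    rw [hμp, hμq]
    gcongr
    linarith
  rw [hμp, show δ ^ 2 * (m / (1 + δ)) / 3 = δ ^ 2 * m / (3 * (1 + δ)) by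
    field_simp] at hupper hpq
  linarith

end Bernoulli

section Glue

variable {β γ ε : Type*}

-- `a` and `b` conditionally independent given `x`; where `ρ x = 0` the quotient is the junk value
-- `0`, which is harmless because `μ · x` vanishes there.
noncomputable def glue (μ : β → γ → ℝ) (ν : γ → ε → ℝ) (ρ : γ → ℝ) (t : β × γ × ε) : ℝ :=
  μ t.1 t.2.1 * ν t.2.1 t.2.2 / ρ t.2.1

variable {μ : β → γ → ℝ} {ν : γ → ε → ℝ} {ρ : γ → ℝ}

lemma glue_nonneg [Fintype β] (hμ0 : ∀ a x, 0 ≤ μ a x) (hν0 : ∀ x b, 0 ≤ ν x b)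
    (hμ : ∀ x, ∑ a, μ a x = ρ x) (t : β × γ × ε) : 0 ≤ glue μ ν ρ t := by
  have hρ : 0 ≤ ρ t.2.1 := hμ t.2.1 ▸ sum_nonneg fun a _ => hμ0 a _
  exact div_nonneg (mul_nonneg (hμ0 _ _) (hν0 _ _)) hρ

lemma sum_glue_right [Fintype β] [Fintype ε] (hμ0 : ∀ a x, 0 ≤ μ a x) (hμ : ∀ x, ∑ a, μ a x = ρ x)
    (hν : ∀ x, ∑ b, ν x b = ρ x) (a : β) (x : γ) : ∑ b, glue μ ν ρ (a, x, b) = μ a x := by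
  simp only [glue, ← sum_div, ← mul_sum, hν]
  by_cases hρ : ρ x = 0
  · have : μ a x = 0 :=
      (sum_eq_zero_iff_of_nonneg fun a _ => hμ0 a x).1 (hρ ▸ hμ x) a (mem_univ a)
    simp [this]
  · exact mul_div_cancel_right₀ _ hρ

lemma sum_glue_left [Fintype β] [Fintype ε] (hν0 : ∀ x b, 0 ≤ ν x b) (hμ : ∀ x, ∑ a, μ a x = ρ x)
    (hν : ∀ x, ∑ b, ν x b = ρ x) (x : γ) (b : ε) : ∑ a, glue μ ν ρ (a, x, b) = ν x b := by
  simp only [glue, ← sum_div, ← sum_mul, hμ]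
  by_cases hρ : ρ x = 0
  · have : ν x b = 0 :=
      (sum_eq_zero_iff_of_nonneg fun b _ => hν0 x b).1 (hρ ▸ hν x) b (mem_univ b)
    simp [this]
  · exact mul_div_cancel_left₀ _ hρ

lemma sum_filter_fst_eq [Fintype β] [Fintype γ] [Fintype ε] (κ : β × γ × ε → ℝ) (P : β → Prop)
    [DecidablePred P] :
    ∑ t with P t.1, κ t = ∑ a with P a, ∑ x, ∑ b, κ (a, x, b) := by
  simp only [sum_filter, Fintype.sum_prod_type, ite_sum_zero]

lemma sum_filter_thd_eq [Fintype β] [Fintype γ] [Fintype ε] (κ : β × γ × ε → ℝ) (P : ε → Prop)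
    [DecidablePred P] :
    ∑ t with P t.2.2, κ t = ∑ b with P b, ∑ a, ∑ x, κ (a, x, b) := by
  simp only [sum_filter, Fintype.sum_prod_type, ite_sum_zero]
  rw [eq_comm, sum_comm]
  exact sum_congr rfl fun _ _ => sum_comm

end Glue

lemma sum_filter_le_sum_filter_add_sum_filter {ι : Type*} [Fintype ι] {κ : ι → ℝ}
    (hκ : ∀ i, 0 ≤ κ i) {P Q R : ι → Prop} [DecidablePred P] [DecidablePred Q] [DecidablePred R]
    (h : ∀ i, P i → κ i ≠ 0 → Q i ∨ R i) :
    ∑ i with P i, κ i ≤ ∑ i with Q i, κ i + ∑ i with R i, κ i := by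
  simp only [sum_filter, ← sum_add_distrib]
  refine sum_le_sum fun i _ => ?_
  have := hκ i
  have := h i
  split_ifs <;> grind

section NestedCoupling

variable {α : Type*} [Fintype α] [DecidableEq α] {m : ℕ}

def supersetsOrAll (m : ℕ) (Z : Finset α) : Finset (Finset α) :=
  {X ∈ powersetCard m univ | #Z ≤ m → Z ⊆ X}

def subsetsOrAll (m : ℕ) (Z : Finset α) : Finset (Finset α) :=
  {X ∈ powersetCard m univ | m ≤ #Z → X ⊆ Z}

lemma supersetsOrAll_nonempty (hm : m ≤ Fintype.card α) (Z : Finset α) :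
    (supersetsOrAll m Z).Nonempty := by
  by_cases hZ : #Z ≤ m
  · obtain ⟨X, hZX, -, hX⟩ := exists_subsuperset_card_eq (subset_univ Z) hZ (by simpa using hm)
    exact ⟨X, by simp [supersetsOrAll, hX, hZX]⟩
  · obtain ⟨X, -, hX⟩ := exists_subset_card_eq (s := (univ : Finset α)) (by simpa using hm)
    exact ⟨X, by simp [supersetsOrAll, hX, hZ]⟩

lemma subsetsOrAll_nonempty (hm : m ≤ Fintype.card α) (Z : Finset α) :
    (subsetsOrAll m Z).Nonempty := by
  by_cases hZ : m ≤ #Z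
  · obtain ⟨X, hXZ, hX⟩ := exists_subset_card_eq hZ
    exact ⟨X, by simp [subsetsOrAll, hX, hXZ]⟩
  · obtain ⟨X, -, hX⟩ := exists_subset_card_eq (s := (univ : Finset α)) (by simpa using hm)
    exact ⟨X, by simp [subsetsOrAll, hX, hZ]⟩

lemma mem_supersetsOrAll_smul_iff (σ : Equiv.Perm α) (Z X : Finset α) :
    X ∈ supersetsOrAll m Z ↔ σ • X ∈ supersetsOrAll m (σ • Z) := by
  simp [supersetsOrAll, card_smul_finset, smul_finset_subset_smul_finset_iff]

lemma mem_subsetsOrAll_smul_iff (σ : Equiv.Perm α) (Z X : Finset α) :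
    X ∈ subsetsOrAll m Z ↔ σ • X ∈ subsetsOrAll m (σ • Z) := by
  simp [subsetsOrAll, card_smul_finset, smul_finset_subset_smul_finset_iff]

noncomputable def lowerCoupling (m : ℕ) (p : ℝ) (Z X : Finset α) : ℝ :=
  bernoulliWeight p Z * uniformWeight (supersetsOrAll m Z) X

noncomputable def upperCoupling (m : ℕ) (q : ℝ) (X Z : Finset α) : ℝ :=
  bernoulliWeight q Z * uniformWeight (subsetsOrAll m Z) X

variable {p q : ℝ}

lemma lowerCoupling_nonneg (hp0 : 0 ≤ p) (hp1 : p ≤ 1) (Z X : Finset α) :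
    0 ≤ lowerCoupling m p Z X :=
  mul_nonneg (bernoulliWeight_nonneg hp0 hp1 Z) (uniformWeight_nonneg _ X)

lemma upperCoupling_nonneg (hq0 : 0 ≤ q) (hq1 : q ≤ 1) (X Z : Finset α) :
    0 ≤ upperCoupling m q X Z :=
  mul_nonneg (bernoulliWeight_nonneg hq0 hq1 Z) (uniformWeight_nonneg _ X)

lemma sum_lowerCoupling_eq_bernoulliWeight (hm : m ≤ Fintype.card α) (Z : Finset α) :
    ∑ X, lowerCoupling m p Z X = bernoulliWeight p Z := by
  simp only [lowerCoupling, ← mul_sum, sum_uniformWeight (supersetsOrAll_nonempty hm Z), mul_one]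

lemma sum_upperCoupling_eq_bernoulliWeight (hm : m ≤ Fintype.card α) (Z : Finset α) :
    ∑ X, upperCoupling m q X Z = bernoulliWeight q Z := by
  simp only [upperCoupling, ← mul_sum, sum_uniformWeight (subsetsOrAll_nonempty hm Z), mul_one]

lemma sum_lowerCoupling_eq_uniformWeight (hm : m ≤ Fintype.card α) (X : Finset α) :
    ∑ Z, lowerCoupling m p Z X = uniformWeight (powersetCard m univ) X :=
  sum_mul_uniformWeight_eq_uniformWeight_powersetCard _ bernoulliWeight_smul sum_bernoulliWeight
    _ mem_supersetsOrAll_smul_iff (supersetsOrAll_nonempty hm)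
    (fun _ _ hX => (mem_powersetCard.1 (mem_filter.1 hX).1).2) X

lemma sum_upperCoupling_eq_uniformWeight (hm : m ≤ Fintype.card α) (X : Finset α) :
    ∑ Z, upperCoupling m q X Z = uniformWeight (powersetCard m univ) X :=
  sum_mul_uniformWeight_eq_uniformWeight_powersetCard _ bernoulliWeight_smul sum_bernoulliWeight
    _ mem_subsetsOrAll_smul_iff (subsetsOrAll_nonempty hm)
    (fun _ _ hX => (mem_powersetCard.1 (mem_filter.1 hX).1).2) X

lemma subset_of_lowerCoupling_ne_zero {Z X : Finset α} (h : lowerCoupling m p Z X ≠ 0)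
    (hZ : #Z ≤ m) : Z ⊆ X :=
  (mem_filter.1 (mem_of_uniformWeight_ne_zero (right_ne_zero_of_mul h))).2 hZ

lemma subset_of_upperCoupling_ne_zero {X Z : Finset α} (h : upperCoupling m q X Z ≠ 0)
    (hZ : m ≤ #Z) : X ⊆ Z :=
  (mem_filter.1 (mem_of_uniformWeight_ne_zero (right_ne_zero_of_mul h))).2 hZ

noncomputable def nestedCoupling (m : ℕ) (p q : ℝ) : Finset α × Finset α × Finset α → ℝ :=
  glue (lowerCoupling m p) (upperCoupling m q) (uniformWeight (powersetCard m univ))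

lemma nestedCoupling_nonneg (hm : m ≤ Fintype.card α) (hp0 : 0 ≤ p) (hp1 : p ≤ 1) (hq0 : 0 ≤ q)
    (hq1 : q ≤ 1) (t : Finset α × Finset α × Finset α) : 0 ≤ nestedCoupling m p q t :=
  glue_nonneg (lowerCoupling_nonneg hp0 hp1) (upperCoupling_nonneg hq0 hq1)
    (sum_lowerCoupling_eq_uniformWeight hm) t

lemma sum_sum_nestedCoupling_fst (hm : m ≤ Fintype.card α) (hp0 : 0 ≤ p) (hp1 : p ≤ 1)
    (T : Finset α) :
    ∑ X, ∑ Z, nestedCoupling m p q (T, X, Z) = bernoulliWeight p T := by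
  simp only [nestedCoupling, sum_glue_right (lowerCoupling_nonneg hp0 hp1)
    (sum_lowerCoupling_eq_uniformWeight hm) (sum_upperCoupling_eq_uniformWeight hm)]
  exact sum_lowerCoupling_eq_bernoulliWeight hm T

lemma sum_sum_nestedCoupling_snd (hm : m ≤ Fintype.card α) (hp0 : 0 ≤ p) (hp1 : p ≤ 1)
    (X : Finset α) :
    ∑ Z₁, ∑ Z₂, nestedCoupling m p q (Z₁, X, Z₂) = uniformWeight (powersetCard m univ) X := by
  simp only [nestedCoupling, sum_glue_right (lowerCoupling_nonneg hp0 hp1)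
    (sum_lowerCoupling_eq_uniformWeight hm) (sum_upperCoupling_eq_uniformWeight hm)]
  exact sum_lowerCoupling_eq_uniformWeight hm X

lemma sum_sum_nestedCoupling_thd (hm : m ≤ Fintype.card α) (hq0 : 0 ≤ q) (hq1 : q ≤ 1)
    (T : Finset α) :
    ∑ Z, ∑ X, nestedCoupling m p q (Z, X, T) = bernoulliWeight q T := by
  rw [sum_comm]
  simp only [nestedCoupling, sum_glue_left (upperCoupling_nonneg hq0 hq1)
    (sum_lowerCoupling_eq_uniformWeight hm) (sum_upperCoupling_eq_uniformWeight hm)]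
  exact sum_upperCoupling_eq_bernoulliWeight hm T

lemma sum_nestedCoupling (hm : m ≤ Fintype.card α) (hp0 : 0 ≤ p) (hp1 : p ≤ 1) :
    ∑ t : Finset α × Finset α × Finset α, nestedCoupling m p q t = 1 := by
  simp only [Fintype.sum_prod_type, sum_sum_nestedCoupling_fst hm hp0 hp1, sum_bernoulliWeight]

lemma sum_nestedCoupling_not_nested_le (hm : m ≤ Fintype.card α) (hp0 : 0 ≤ p) (hp1 : p ≤ 1)
    (hq0 : 0 ≤ q) (hq1 : q ≤ 1) :
    ∑ t : Finset α × Finset α × Finset α with ¬(t.1 ⊆ t.2.1 ∧ t.2.1 ⊆ t.2.2), nestedCoupling m p q t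
      ≤ ∑ Z : Finset α with m < #Z, bernoulliWeight p Z
        + ∑ Z : Finset α with #Z < m, bernoulliWeight q Z := by
  calc _ ≤ ∑ t with m < #t.1, nestedCoupling m p q t
        + ∑ t with #t.2.2 < m, nestedCoupling m p q t := by
        refine sum_filter_le_sum_filter_add_sum_filter (nestedCoupling_nonneg hm hp0 hp1 hq0 hq1)
          fun ⟨Z₁, X, Z₂⟩ hbad hne => ?_
        simp only [nestedCoupling, glue, div_ne_zero_iff, mul_ne_zero_iff] at hne
        by_contra! hcard
        exact hbad ⟨subset_of_lowerCoupling_ne_zero hne.1.1 hcard.1,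
          subset_of_upperCoupling_ne_zero hne.1.2 hcard.2⟩
    _ = _ := by
        congr 1
        · exact (sum_filter_fst_eq _ fun Z => m < #Z).trans
            (sum_congr rfl fun Z _ => sum_sum_nestedCoupling_fst hm hp0 hp1 Z)
        · exact (sum_filter_thd_eq _ fun Z => #Z < m).trans
            (sum_congr rfl fun Z _ => sum_sum_nestedCoupling_thd hm hq0 hq1 Z)

end NestedCoupling
end SubsetCoupling

open SubsetCoupling

theorem stmt9_general (α : Type) [Fintype α] [DecidableEq α] (N : ℕ) (hcard : Fintype.card α = N)
    (hN : 1 ≤ N) (m : ℕ) (hmN : m ≤ N)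
    (δ : ℝ) (hδ0 : 0 < δ) (hδ1 : δ < 1) (hmδ : (m : ℝ) ≤ (1 - δ) * N) :
    ∃ κ : (Finset α × Finset α × Finset α) → ℝ,
      (∀ t, 0 ≤ κ t) ∧
      (∑ t : Finset α × Finset α × Finset α, κ t = 1) ∧
      -- (i) middle marginal: uniform over `m`-element subsets
      (∀ X : Finset α, (∑ Z₁ : Finset α, ∑ Z₂ : Finset α, κ (Z₁, X, Z₂)) =
        if X.card = m then 1 / (N.choose m : ℝ) else 0) ∧
      -- (ii) first marginal: Bernoulli `p⁻ = m/((1+δ)N)` subset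
      (∀ T : Finset α, (∑ X : Finset α, ∑ Z₂ : Finset α, κ (T, X, Z₂)) =
        ((m : ℝ) / ((1 + δ) * N)) ^ T.card *
          (1 - (m : ℝ) / ((1 + δ) * N)) ^ (N - T.card)) ∧
      -- (ii') third marginal: Bernoulli `p⁺ = m/((1−δ)N)` subset
      (∀ T : Finset α, (∑ Z₁ : Finset α, ∑ X : Finset α, κ (Z₁, X, T)) =
        ((m : ℝ) / ((1 - δ) * N)) ^ T.card *
          (1 - (m : ℝ) / ((1 - δ) * N)) ^ (N - T.card)) ∧
      -- (iii) nesting succeeds with high probability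
      (1 - 2 * Real.exp (-(δ ^ 2 * m / (3 * (1 + δ)))) ≤
        ∑ t ∈ Finset.univ.filter
          (fun t : Finset α × Finset α × Finset α => t.1 ⊆ t.2.1 ∧ t.2.1 ⊆ t.2.2), κ t) := by
  subst hcard
  have hN0 : (0 : ℝ) < Fintype.card α := by exact_mod_cast hN
  have h1δ : 0 < 1 - δ := by linarith
  set p := (m : ℝ) / ((1 + δ) * Fintype.card α) with hp
  set q := (m : ℝ) / ((1 - δ) * Fintype.card α) with hq
  have hp0 : 0 ≤ p := by positivity
  have hq0 : 0 ≤ q := div_nonneg (Nat.cast_nonneg m) (mul_pos h1δ hN0).le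
  have hpq : p ≤ q := div_le_div_of_nonneg_left (Nat.cast_nonneg m)
    (mul_pos h1δ hN0) (by gcongr; linarith)
  have hq1 : q ≤ 1 := div_le_one_of_le₀ hmδ (mul_pos h1δ hN0).le
  have hp1 : p ≤ 1 := hpq.trans hq1
  have hbad := sum_bernoulliWeight_card_gt_add_sum_card_lt_le (m := m) hp0 hp1 hq0 hq1 hδ0 hδ1
    (by rw [hp]; field_simp) (by rw [hq]; field_simp)
  refine ⟨nestedCoupling m p q, nestedCoupling_nonneg hmN hp0 hp1 hq0 hq1,
    sum_nestedCoupling hmN hp0 hp1, fun X => ?_, sum_sum_nestedCoupling_fst hmN hp0 hp1,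
    sum_sum_nestedCoupling_thd hmN hq0 hq1, ?_⟩
  · rw [sum_sum_nestedCoupling_snd hmN hp0 hp1, uniformWeight_powersetCard_univ, one_div]
  · have htotal := sum_filter_add_sum_filter_not univ
      (fun t : Finset α × Finset α × Finset α => t.1 ⊆ t.2.1 ∧ t.2.1 ⊆ t.2.2) (nestedCoupling m p q)
    have hnot := sum_nestedCoupling_not_nested_le hmN hp0 hp1 hq0 hq1
    rw [sum_nestedCoupling hmN hp0 hp1] at htotal
    linarith

/-- Coupling lemma for uniform `m`-subsets and Bernoulli subsets: for a finite set `A` of size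
`N ≥ 1`, `1 ≤ m ≤ N`, `δ ∈ (0,1)` with `m ≤ (1−δ)N`, and `p⁻ = m/((1+δ)N)`,
`p⁺ = m/((1−δ)N)`, there is a coupling `κ` of (Bernoulli `p⁻`, uniform `m`-subset,
Bernoulli `p⁺`) under which `Z⁻ ⊆ X ⊆ Z⁺` with probability at least
`1 − 2 exp(−δ² m / (3(1+δ)))`. -/
theorem stmt9 (α : Type) [Fintype α] [DecidableEq α] (N : ℕ) (hcard : Fintype.card α = N)
    (hN : 1 ≤ N) (m : ℕ) (hm1 : 1 ≤ m) (hmN : m ≤ N)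
    (δ : ℝ) (hδ0 : 0 < δ) (hδ1 : δ < 1) (hmδ : (m : ℝ) ≤ (1 - δ) * N) :
    ∃ κ : (Finset α × Finset α × Finset α) → ℝ,
      (∀ t, 0 ≤ κ t) ∧
      (∑ t : Finset α × Finset α × Finset α, κ t = 1) ∧
      -- (i) middle marginal: uniform over `m`-element subsets
      (∀ X : Finset α, (∑ Z₁ : Finset α, ∑ Z₂ : Finset α, κ (Z₁, X, Z₂)) =
        if X.card = m then 1 / (N.choose m : ℝ) else 0) ∧
      -- (ii) first marginal: Bernoulli `p⁻ = m/((1+δ)N)` subset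
      (∀ T : Finset α, (∑ X : Finset α, ∑ Z₂ : Finset α, κ (T, X, Z₂)) =
        ((m : ℝ) / ((1 + δ) * N)) ^ T.card *
          (1 - (m : ℝ) / ((1 + δ) * N)) ^ (N - T.card)) ∧
      -- (ii') third marginal: Bernoulli `p⁺ = m/((1−δ)N)` subset
      (∀ T : Finset α, (∑ Z₁ : Finset α, ∑ X : Finset α, κ (Z₁, X, T)) =
        ((m : ℝ) / ((1 - δ) * N)) ^ T.card *
          (1 - (m : ℝ) / ((1 - δ) * N)) ^ (N - T.card)) ∧
      -- (iii) nesting succeeds with high probability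
      (1 - 2 * Real.exp (-(δ ^ 2 * m / (3 * (1 + δ)))) ≤
        ∑ t ∈ Finset.univ.filter
          (fun t : Finset α × Finset α × Finset α => t.1 ⊆ t.2.1 ∧ t.2.1 ⊆ t.2.2), κ t) :=
  stmt9_general α N hcard hN m hmN δ hδ0 hδ1 hmδ
end
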